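/- With Υ_t = √(ᾱ_t)(1 - Λ_t) (componentwise, Λ_t ∈ (0,1)) and λ_t = σ_t/Υ_t, the first-order sampler update x_t = Υ_t[(λ_t²/λ_s²)(x_s/Υ_s) + (Λ_t/(1-Λ_t) - (Λ_s/(1-Λ_s))(λ_t²/λ_s²))·x̂ + (1 - λ_t²/λ_s²)·x̃] is exact when the state is on the noiseless mixture manifold: if x_s = √(ᾱ_s)·(Λ_s x̂ + (1-Λ_s)x̃) then the deterministic update yields x_t = √(ᾱ_t)·(Λ_t x̂ + (1-Λ_t)x̃). -/

import Mathlib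

/-! On the noiseless mixture manifold the normalized state `x_s / Υ_s` equals
`Λ_s/(1-Λ_s)·x̂ + x̃`. The update coefficients are chosen so that every term carrying the
ratio `λ_t²/λ_s²` cancels against this, leaving `Λ_t/(1-Λ_t)·x̂ + x̃`, which `Υ_t` scales
back to the mixture at time `t`. -/

lemma mixture_eq_scale_mul_normalized {Λ : ℝ} (hΛ : Λ ≠ 1) (c a b : ℝ) :
    c * (Λ * a + (1 - Λ) * b) = c * (1 - Λ) * (Λ / (1 - Λ) * a + b) := by
  have : 1 - Λ ≠ 0 := sub_ne_zero.mpr hΛ.symm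
  field_simp

lemma mixture_div_scale {c Λ : ℝ} (hc : c ≠ 0) (hΛ : Λ ≠ 1) (a b : ℝ) :
    c * (Λ * a + (1 - Λ) * b) / (c * (1 - Λ)) = Λ / (1 - Λ) * a + b := by
  rw [mixture_eq_scale_mul_normalized hΛ,
    mul_div_cancel_left₀ _ (mul_ne_zero hc (sub_ne_zero.mpr hΛ.symm))]

lemma first_order_update_ratio_cancel (r p q a b : ℝ) :
    r * (p * a + b) + (q - p * r) * a + (1 - r) * b = q * a + b := by
  ring

theorem first_order_sampler_consistency_general
    (abars abart Λs Λt : ℝ)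
    (habars : abars ∈ Set.Ioo (0 : ℝ) 1)
    (hΛs : Λs ∈ Set.Ioo (0 : ℝ) 1) (hΛt : Λt ∈ Set.Ioo (0 : ℝ) 1)
    (Υs Υt lams lamt : ℝ)
    (hΥs : Υs = Real.sqrt abars * (1 - Λs)) (hΥt : Υt = Real.sqrt abart * (1 - Λt))
    (xsrc xtil xs xt : ℝ)
    (hxs : xs = Real.sqrt abars * (Λs * xsrc + (1 - Λs) * xtil))
    (hxt : xt = Υt * ((lamt ^ 2 / lams ^ 2) * (xs / Υs)
        + (Λt / (1 - Λt) - (Λs / (1 - Λs)) * (lamt ^ 2 / lams ^ 2)) * xsrc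
        + (1 - lamt ^ 2 / lams ^ 2) * xtil)) :
    xt = Real.sqrt abart * (Λt * xsrc + (1 - Λt) * xtil) := by
  have hsqrt : Real.sqrt abars ≠ 0 := (Real.sqrt_pos.mpr habars.1).ne'
  have hxs_normalized : xs / Υs = Λs / (1 - Λs) * xsrc + xtil := by
    rw [hxs, hΥs, mixture_div_scale hsqrt hΛs.2.ne]
  rw [hxt, hxs_normalized, first_order_update_ratio_cancel, hΥt,
    mixture_eq_scale_mul_normalized hΛt.2.ne]

/-- Consistency of the deterministic first-order sampler update on the noiseless
mixture manifold: with `Υ_r = √ᾱ_r(1-Λ_r)`, `λ_r = σ_r/Υ_r`, `σ_r = √(1-ᾱ_r)`,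
if `x_s = √ᾱ_s·(Λ_s x̂ + (1-Λ_s)x̃)` then the update yields
`x_t = √ᾱ_t·(Λ_t x̂ + (1-Λ_t)x̃)`. -/
theorem first_order_sampler_consistency
    (abars abart Λs Λt : ℝ)
    (habars : abars ∈ Set.Ioo (0 : ℝ) 1) (habart : abart ∈ Set.Ioo (0 : ℝ) 1)
    (hΛs : Λs ∈ Set.Ioo (0 : ℝ) 1) (hΛt : Λt ∈ Set.Ioo (0 : ℝ) 1)
    (σs σt Υs Υt lams lamt : ℝ)
    (hσs : σs = Real.sqrt (1 - abars)) (hσt : σt = Real.sqrt (1 - abart))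
    (hΥs : Υs = Real.sqrt abars * (1 - Λs)) (hΥt : Υt = Real.sqrt abart * (1 - Λt))
    (hlams : lams = σs / Υs) (hlamt : lamt = σt / Υt)
    (xsrc xtil xs xt : ℝ)
    (hxs : xs = Real.sqrt abars * (Λs * xsrc + (1 - Λs) * xtil))
    (hxt : xt = Υt * ((lamt ^ 2 / lams ^ 2) * (xs / Υs)
        + (Λt / (1 - Λt) - (Λs / (1 - Λs)) * (lamt ^ 2 / lams ^ 2)) * xsrc
        + (1 - lamt ^ 2 / lams ^ 2) * xtil)) :
    xt = Real.sqrt abart * (Λt * xsrc + (1 - Λt) * xtil) :=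
  first_order_sampler_consistency_general abars abart Λs Λt habars hΛs hΛt Υs Υt lams lamt hΥs hΥt
    xsrc xtil xs xt hxs hxt
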